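/- Let X be a real Banach space whose dual X* is isometrically isomorphic to ℓ₁. Suppose V is a weak*-closed linear subspace of X*, P : X* → X* is a weak*-continuous linear projection onto V with ‖P‖ ≤ 1, and T : V → ℓ₁ is a surjective linear isometry that is a homeomorphism from the weak* topology of X* (restricted to V) onto the weak* topology that ℓ₁ carries as the dual of c. Then there exists a linear isometric embedding of c into X. -/

import Mathlib

/-!
The composite `T ∘ P : X* → ℓ₁ = c*` is weak*-to-weak* continuous, so for each `x ∈ c`
the functional `f ↦ ⟨T (P f), x⟩` on `X*` is weak*-continuous, hence evaluation at a
unique `Φ x ∈ X`; this `Φ` is linear. Since `‖T ∘ P‖ ≤ 1`, `‖Φ x‖ ≤ ‖x‖`. Conversely,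
the norm-one `v ∈ V` with `T v = e_{n+1}` is fixed by `P` and satisfies `v (Φ x) = x n`,
so `‖Φ x‖ ≥ sup_n |x n| = ‖x‖`.
-/

open Filter Topology Metric
open scoped ENNReal

noncomputable section

/-- The space `ℓ₁` of absolutely summable real sequences. -/
abbrev EllOne : Type := lp (fun _ : ℕ => ℝ) 1

/-- The subspace of `ℓ∞` consisting of convergent real sequences. -/
def convSeq : Subspace ℝ (lp (fun _ : ℕ => ℝ) ∞) where
  carrier := {f | ∃ l : ℝ, Tendsto (fun n => f n) atTop (𝓝 l)}
  add_mem' := by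
    rintro f g ⟨a, ha⟩ ⟨b, hb⟩
    exact ⟨a + b, by simpa [lp.coeFn_add] using ha.add hb⟩
  zero_mem' := ⟨0, by simp [lp.coeFn_zero]⟩
  smul_mem' := by
    rintro c f ⟨a, ha⟩
    exact ⟨c * a, by simpa [lp.coeFn_smul] using ha.const_mul c⟩

/-- The Banach space `c` of convergent real sequences with the sup norm,
realized as a subspace of `ℓ∞`. -/
abbrev SpaceC : Type := ↥convSeq

/-- A normed space is polyhedral if the unit ball of each of its
finite-dimensional subspaces is a polytope (the convex hull of finitely many points). -/
def IsPolyhedralSpace (X : Type*) [NormedAddCommGroup X] [NormedSpace ℝ X] : Prop :=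
  ∀ Y : Subspace ℝ X, FiniteDimensional ℝ Y →
    ∃ F : Set Y, F.Finite ∧ closedBall (0 : Y) 1 = convexHull ℝ F

/-- The set of extreme points of the closed unit ball of the dual of `X`. -/
def extBdual (X : Type*) [NormedAddCommGroup X] [NormedSpace ℝ X] :
    Set (StrongDual ℝ X) :=
  Set.extremePoints ℝ (closedBall (0 : StrongDual ℝ X) 1)

/-- `D(x) = {x* ∈ S_{X*} : x*(x) = 1}`. -/
def Dface {X : Type*} [NormedAddCommGroup X] [NormedSpace ℝ X] (x : X) :
    Set (StrongDual ℝ X) :=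
  {f | ‖f‖ = 1 ∧ f x = 1}

/-- The limit of a convergent sequence `x ∈ c`. -/
def cLim (x : SpaceC) : ℝ :=
  limUnder atTop (fun n => (x : lp (fun _ : ℕ => ℝ) ∞) n)

/-- The duality pairing identifying `ℓ₁` with the dual `c*` of `c`:
`f(x) = f(0)·lim_i x(i) + Σ_{i≥0} f(i+1)·x(i)` (indices starting from `0`). -/
def cPairing (f : EllOne) (x : SpaceC) : ℝ :=
  f 0 * cLim x + ∑' i : ℕ, f (i + 1) * (x : lp (fun _ : ℕ => ℝ) ∞) i

/-- The weak* topology of `X*` restricted to a subspace `V ⊆ X*`. -/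
def wstarSubspaceTop {X : Type} [NormedAddCommGroup X] [NormedSpace ℝ X]
    (V : Submodule ℝ (StrongDual ℝ X)) : TopologicalSpace V :=
  TopologicalSpace.induced
    (fun v : V => StrongDual.toWeakDual (v : StrongDual ℝ X)) inferInstance

/-- The weak* topology that `ℓ₁` carries as the dual of `c`, i.e. the topology of
pointwise convergence of the pairing `cPairing` against elements of `c`. -/
def ellOneWstarAsDualC : TopologicalSpace EllOne :=
  TopologicalSpace.induced (fun f : EllOne => fun x : SpaceC => cPairing f x)
    Pi.topologicalSpace

theorem WeakDual.exists_linearMap_dual_apply_eq {𝕜 X Y : Type*} [NontriviallyNormedField 𝕜]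
    [AddCommGroup X] [TopologicalSpace X] [Module 𝕜 X] [SeparatingDual 𝕜 X]
    [AddCommGroup Y] [Module 𝕜 Y]
    (B : StrongDual 𝕜 X →ₗ[𝕜] Y →ₗ[𝕜] 𝕜)
    (hB : ∀ y, Continuous fun f : WeakDual 𝕜 X => B (WeakDual.toStrongDual f) y) :
    ∃ Φ : Y →ₗ[𝕜] X, ∀ f y, f (Φ y) = B f y := by
  let evalEquiv : X ≃ₗ[𝕜] StrongDual 𝕜 (WeakDual 𝕜 X) :=
    LinearMap.rightDualEquiv (topDualPairing 𝕜 X)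
      fun _ hx => SeparatingDual.eq_zero_of_forall_dual_eq_zero hx
  let B' : Y →ₗ[𝕜] StrongDual 𝕜 (WeakDual 𝕜 X) :=
    { toFun := fun y => ⟨B.flip y, hB y⟩
      map_add' := fun y₁ y₂ => ContinuousLinearMap.ext fun f => (B f).map_add y₁ y₂
      map_smul' := fun c y => ContinuousLinearMap.ext fun f => (B f).map_smul c y }
  exact ⟨evalEquiv.symm ∘ₗ B', fun f y =>
    DFunLike.congr_fun (evalEquiv.apply_symm_apply (B' y)) f⟩

namespace SpaceC

lemma norm_apply_le (x : SpaceC) (n : ℕ) : ‖(x : lp (fun _ : ℕ => ℝ) ∞) n‖ ≤ ‖x‖ :=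
  lp.norm_apply_le_norm ENNReal.top_ne_zero _ n

lemma norm_le_of_forall_exists_dual_apply_eq {E : Type*} [NormedAddCommGroup E]
    [NormedSpace ℝ E] {x : SpaceC} {y : E}
    (h : ∀ n, ∃ f : StrongDual ℝ E, ‖f‖ ≤ 1 ∧ f y = (x : lp (fun _ : ℕ => ℝ) ∞) n) :
    ‖x‖ ≤ ‖y‖ :=
  lp.norm_le_of_forall_le (f := (x : lp (fun _ : ℕ => ℝ) ∞)) (norm_nonneg y) fun n => by
    obtain ⟨f, hf, hfy⟩ := h n
    rw [← hfy]
    exact f.le_of_opNorm_le hf y |>.trans_eq (one_mul _)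

lemma tendsto_cLim (x : SpaceC) :
    Tendsto (fun n => (x : lp (fun _ : ℕ => ℝ) ∞) n) atTop (𝓝 (cLim x)) := by
  obtain ⟨l, hl⟩ := x.2
  rwa [cLim, hl.limUnder_eq]

lemma abs_cLim_le (x : SpaceC) : |cLim x| ≤ ‖x‖ :=
  le_of_tendsto (tendsto_cLim x).abs (Eventually.of_forall (norm_apply_le x))

lemma cLim_add (x y : SpaceC) : cLim (x + y) = cLim x + cLim y :=
  tendsto_nhds_unique (tendsto_cLim (x + y)) ((tendsto_cLim x).add (tendsto_cLim y))

lemma cLim_smul (c : ℝ) (x : SpaceC) : cLim (c • x) = c * cLim x :=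
  tendsto_nhds_unique (tendsto_cLim (c • x)) ((tendsto_cLim x).const_mul c)

end SpaceC

namespace EllOne

lemma summable_norm (f : EllOne) : Summable fun i => ‖f i‖ := by
  simpa using (lp.memℓp f).summable (by norm_num : (0 : ℝ) < (1 : ℝ≥0∞).toReal)

lemma norm_eq_norm_zero_add_tsum (f : EllOne) : ‖f‖ = ‖f 0‖ + ∑' i, ‖f (i + 1)‖ := by
  rw [← (summable_norm f).tsum_eq_zero_add]
  simpa using lp.norm_eq_tsum_rpow (by norm_num : (0 : ℝ) < (1 : ℝ≥0∞).toReal) f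

lemma norm_succ_mul_le (f : EllOne) (x : SpaceC) (i : ℕ) :
    ‖f (i + 1) * (x : lp (fun _ : ℕ => ℝ) ∞) i‖ ≤ ‖f (i + 1)‖ * ‖x‖ :=
  norm_mul_le_of_le le_rfl (SpaceC.norm_apply_le x i)

lemma summable_norm_succ_mul_norm (f : EllOne) (x : SpaceC) :
    Summable fun i => ‖f (i + 1)‖ * ‖x‖ :=
  ((summable_nat_add_iff 1).2 (summable_norm f)).mul_right ‖x‖

lemma summable_norm_succ_mul (f : EllOne) (x : SpaceC) :
    Summable fun i => ‖f (i + 1) * (x : lp (fun _ : ℕ => ℝ) ∞) i‖ :=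
  (summable_norm_succ_mul_norm f x).of_nonneg_of_le (fun _ => norm_nonneg _)
    (norm_succ_mul_le f x)

lemma summable_succ_mul (f : EllOne) (x : SpaceC) :
    Summable fun i => f (i + 1) * (x : lp (fun _ : ℕ => ℝ) ∞) i :=
  (summable_norm_succ_mul f x).of_norm

end EllOne

namespace cPairing

lemma add_left (f g : EllOne) (x : SpaceC) :
    cPairing (f + g) x = cPairing f x + cPairing g x := by
  simp only [cPairing, lp.coeFn_add, Pi.add_apply, add_mul,
    (EllOne.summable_succ_mul f x).tsum_add (EllOne.summable_succ_mul g x)]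
  ring

lemma smul_left (c : ℝ) (f : EllOne) (x : SpaceC) :
    cPairing (c • f) x = c * cPairing f x := by
  simp only [cPairing, lp.coeFn_smul, Pi.smul_apply, smul_eq_mul, mul_assoc, tsum_mul_left]
  ring

lemma add_right (f : EllOne) (x y : SpaceC) :
    cPairing f (x + y) = cPairing f x + cPairing f y := by
  simp only [cPairing, SpaceC.cLim_add, Submodule.coe_add, lp.coeFn_add, Pi.add_apply, mul_add,
    (EllOne.summable_succ_mul f x).tsum_add (EllOne.summable_succ_mul f y)]
  ring

lemma smul_right (c : ℝ) (f : EllOne) (x : SpaceC) :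
    cPairing f (c • x) = c * cPairing f x := by
  simp only [cPairing, SpaceC.cLim_smul, Submodule.coe_smul, lp.coeFn_smul, Pi.smul_apply,
    smul_eq_mul, mul_left_comm _ c, tsum_mul_left]
  ring

lemma abs_le (f : EllOne) (x : SpaceC) : |cPairing f x| ≤ ‖f‖ * ‖x‖ := by
  have hhead : |f 0 * cLim x| ≤ ‖f 0‖ * ‖x‖ := by
    rw [abs_mul]
    exact mul_le_mul_of_nonneg_left (SpaceC.abs_cLim_le x) (abs_nonneg _)
  have htail : ‖∑' i, f (i + 1) * (x : lp (fun _ : ℕ => ℝ) ∞) i‖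
      ≤ (∑' i, ‖f (i + 1)‖) * ‖x‖ := by
    rw [← tsum_mul_right]
    exact (norm_tsum_le_tsum_norm (EllOne.summable_norm_succ_mul f x)).trans
      ((EllOne.summable_norm_succ_mul f x).tsum_le_tsum (EllOne.norm_succ_mul_le f x)
        (EllOne.summable_norm_succ_mul_norm f x))
  calc |cPairing f x|
      ≤ |f 0 * cLim x| + ‖∑' i, f (i + 1) * (x : lp (fun _ : ℕ => ℝ) ∞) i‖ := abs_add_le _ _
    _ ≤ ‖f‖ * ‖x‖ := by rw [EllOne.norm_eq_norm_zero_add_tsum]; linarith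

lemma single_succ (n : ℕ) (x : SpaceC) :
    cPairing (lp.single 1 (n + 1) 1) x = (x : lp (fun _ : ℕ => ℝ) ∞) n := by
  rw [cPairing, lp.single_apply_ne _ _ _ n.succ_ne_zero.symm, zero_mul, zero_add,
    tsum_eq_single n fun i hi => by rw [lp.single_apply_ne _ _ _ (by omega), zero_mul],
    lp.single_apply_self, one_mul]

end cPairing

def cPairingₗ : EllOne →ₗ[ℝ] SpaceC →ₗ[ℝ] ℝ :=
  LinearMap.mk₂ ℝ cPairing cPairing.add_left cPairing.smul_left cPairing.add_right
    cPairing.smul_right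

lemma Continuous.cPairing_left {α : Type*} [TopologicalSpace α] {g : α → EllOne}
    (hg : Continuous[_, ellOneWstarAsDualC] g) (x : SpaceC) :
    Continuous fun a => cPairing (g a) x :=
  continuous_pi_iff.1 (continuous_induced_rng.1 hg) x

theorem isometric_c_of_wstar_complemented_dual_copy_general
    {X : Type} [NormedAddCommGroup X] [NormedSpace ℝ X]
    (V : Submodule ℝ (StrongDual ℝ X))
    (P : StrongDual ℝ X →L[ℝ] StrongDual ℝ X)
    (hPw : Continuous fun f : WeakDual ℝ X =>
      StrongDual.toWeakDual (P (WeakDual.toStrongDual f)))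
    (hPrange : ∀ f, P f ∈ V) (hPid : ∀ v ∈ V, P v = v) (hPnorm : ‖P‖ ≤ 1)
    (T : V →ₗ[ℝ] EllOne)
    (hTiso : ∀ v : V, ‖T v‖ = ‖v‖) (hTsurj : Function.Surjective T)
    (hTcont : Continuous[wstarSubspaceTop V, ellOneWstarAsDualC] T) :
    Nonempty (SpaceC →ₗᵢ[ℝ] X) := by
  let Q : StrongDual ℝ X →ₗ[ℝ] V := P.toLinearMap.codRestrict V hPrange
  have hQ : Continuous[_, wstarSubspaceTop V]
      fun f : WeakDual ℝ X => Q (WeakDual.toStrongDual f) :=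
    continuous_induced_rng.2 hPw
  obtain ⟨Φ, hΦ⟩ := WeakDual.exists_linearMap_dual_apply_eq (cPairingₗ ∘ₗ T ∘ₗ Q)
    (@Continuous.comp _ _ _ _ (wstarSubspaceTop V) ellOneWstarAsDualC _ _ hTcont hQ
      ).cPairing_left
  have hTQ (g : StrongDual ℝ X) : ‖T (Q g)‖ ≤ ‖g‖ := by
    rw [hTiso]
    exact P.le_of_opNorm_le hPnorm g |>.trans_eq (one_mul _)
  refine ⟨⟨Φ, fun x => le_antisymm ?_ ?_⟩⟩
  · refine NormedSpace.norm_le_dual_bound ℝ _ (norm_nonneg x) fun g => ?_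
    rw [hΦ, mul_comm]
    exact (cPairing.abs_le _ x).trans (by gcongr; exact hTQ g)
  · refine SpaceC.norm_le_of_forall_exists_dual_apply_eq fun n => ?_
    obtain ⟨v, hv⟩ := hTsurj (lp.single 1 (n + 1) 1)
    have hv_norm : ‖v‖ = 1 := by rw [← hTiso, hv, lp.norm_single zero_lt_one, norm_one]
    have hQv : Q v = v := Subtype.ext (hPid v v.2)
    exact ⟨v, hv_norm.le, by simp [hΦ, cPairingₗ, hQv, hv, cPairing.single_succ]⟩

/-- If `X` is a predual of `ℓ₁`, `V ⊆ X*` is a weak*-closed subspace which is the range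
of a weak*-continuous contractive projection `P` on `X*`, and `T : V → ℓ₁` is a surjective
linear isometry which is a homeomorphism from the weak* topology of `X*` restricted to `V`
onto the weak* topology of `ℓ₁` as the dual of `c`, then `X` contains an isometric copy
of `c`. -/
theorem isometric_c_of_wstar_complemented_dual_copy
    {X : Type} [NormedAddCommGroup X] [NormedSpace ℝ X] [CompleteSpace X]
    (hdual : Nonempty (StrongDual ℝ X ≃ₗᵢ[ℝ] EllOne))
    (V : Submodule ℝ (StrongDual ℝ X))
    (hVclosed : IsClosed {f : WeakDual ℝ X | WeakDual.toStrongDual f ∈ V})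
    (P : StrongDual ℝ X →L[ℝ] StrongDual ℝ X)
    (hPw : Continuous fun f : WeakDual ℝ X =>
      StrongDual.toWeakDual (P (WeakDual.toStrongDual f)))
    (hPrange : ∀ f, P f ∈ V) (hPid : ∀ v ∈ V, P v = v) (hPnorm : ‖P‖ ≤ 1)
    (T : V →ₗ[ℝ] EllOne)
    (hTiso : ∀ v : V, ‖T v‖ = ‖v‖) (hTsurj : Function.Surjective T)
    (hTcont : Continuous[wstarSubspaceTop V, ellOneWstarAsDualC] T)
    (hTopen : @IsOpenMap _ _ (wstarSubspaceTop V) ellOneWstarAsDualC T) :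
    Nonempty (SpaceC →ₗᵢ[ℝ] X) :=
  isometric_c_of_wstar_complemented_dual_copy_general V P hPw hPrange hPid hPnorm T hTiso hTsurj
    hTcont

end
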